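/- Let a > 0 and let R > 0 be such that the chordal diameter of \overline{ℝⁿ}∖B(0,R) is less than a/2. Then every continuum C ⊂ \overline{ℝⁿ} with chordal diameter h(C) ≥ a contains a subcontinuum C₁ ⊂ \overline{B(0,R)} with h(C₁) ≥ a/4. -/

import Mathlib

open MeasureTheory Metric Set Filter Topology ENNReal

noncomputable section

/-- Euclidean `n`-space `ℝⁿ`. -/
abbrev Eucl (n : ℕ) : Type := EuclideanSpace ℝ (Fin n)

/-- The one-point compactification `\overline{ℝⁿ} = ℝⁿ ∪ {∞}`. -/
abbrev RSphere (n : ℕ) : Type := OnePoint (Eucl n)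

/-- The canonical inclusion `ℝⁿ ⊆ \overline{ℝⁿ}`. -/
def toRS {n : ℕ} (x : Eucl n) : RSphere n := Option.some x

/-- A curve: a map of an order-connected subset (interval) of `ℝ`, continuous on it. -/
structure Curve (X : Type*) [TopologicalSpace X] where
  toFun : ℝ → X
  domain : Set ℝ
  ord : domain.OrdConnected
  cont : ContinuousOn toFun domain

namespace Curve

variable {X : Type*} [TopologicalSpace X]

/-- Line integral of a density `ρ` along a curve, with respect to a generalized
distance `d`, defined as a supremum of Riemann–Stieltjes type sums over partitions. -/
def integralAlong (d : X → X → ℝ≥0∞) (ρ : X → ℝ≥0∞) (c : Curve X) : ℝ≥0∞ :=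
  ⨆ q : ℕ × {u : ℕ → ℝ // Monotone u ∧ ∀ i, u i ∈ c.domain},
    ∑ i ∈ Finset.range q.1,
      ρ (c.toFun (q.2.1 i)) * d (c.toFun (q.2.1 (i + 1))) (c.toFun (q.2.1 i))

/-- Restriction of a curve to a closed subinterval of its domain. -/
def restrictIcc (c : Curve X) (a b : ℝ) : Curve X :=
  ⟨c.toFun, c.domain ∩ Set.Icc a b, c.ord.inter Set.ordConnected_Icc,
    c.cont.mono Set.inter_subset_left⟩

/-- A curve is locally rectifiable (w.r.t. `d`) if it has finite length on
every compact subinterval of its domain. -/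
def LocRectifiable (d : X → X → ℝ≥0∞) (c : Curve X) : Prop :=
  ∀ a b : ℝ, (c.restrictIcc a b).integralAlong d (fun _ => 1) < ⊤

end Curve

/-- `ρ` is admissible for the curve family `Γ`: the line integral of `ρ` along every
locally rectifiable curve of `Γ` is at least `1`. -/
def IsAdmissibleFor {X : Type*} [TopologicalSpace X] (d : X → X → ℝ≥0∞)
    (Γ : Set (Curve X)) (ρ : X → ℝ≥0∞) : Prop :=
  ∀ c ∈ Γ, c.LocRectifiable d → 1 ≤ c.integralAlong d ρ

/-- The `p`-modulus of a family of curves in `ℝⁿ`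
(`⊤` if there is no admissible function, as an infimum over the empty type). -/
def pModulus (n : ℕ) (p : ℝ) (Γ : Set (Curve (Eucl n))) : ℝ≥0∞ :=
  ⨅ ρ : {ρ : Eucl n → ℝ≥0∞ // Measurable ρ ∧ IsAdmissibleFor edist Γ ρ},
    ∫⁻ x, ρ.1 x ^ p

/-- Euclidean extended distance on `\overline{ℝⁿ}`: `∞` is at infinite distance
from every other point. -/
def opDist {n : ℕ} : RSphere n → RSphere n → ℝ≥0∞ := fun x y =>
  Option.casesOn (motive := fun _ => ℝ≥0∞) x
    (Option.casesOn (motive := fun _ => ℝ≥0∞) y 0 (fun _ => ⊤))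
    (fun a => Option.casesOn (motive := fun _ => ℝ≥0∞) y ⊤ (fun b => edist a b))

/-- Extension of a density on `ℝⁿ` to `\overline{ℝⁿ}` by `0` at `∞`. -/
def extFun {n : ℕ} (ρ : Eucl n → ℝ≥0∞) : RSphere n → ℝ≥0∞ := fun x =>
  Option.casesOn (motive := fun _ => ℝ≥0∞) x 0 ρ

/-- The `p`-modulus of a family of curves in `\overline{ℝⁿ}`; admissible densities live on
`ℝⁿ` and are extended by `0` at `∞`. -/
def pModulusOP (n : ℕ) (p : ℝ) (Γ : Set (Curve (RSphere n))) : ℝ≥0∞ :=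
  ⨅ ρ : {ρ : Eucl n → ℝ≥0∞ // Measurable ρ ∧ IsAdmissibleFor opDist Γ (extFun ρ)},
    ∫⁻ x, ρ.1 x ^ p

/-- The family of curves joining `E₀` and `E₁` in `A`. -/
def JoinCurves {X : Type*} [TopologicalSpace X] (E₀ E₁ A : Set X) : Set (Curve X) :=
  {c | ∃ a b : ℝ, a ≤ b ∧ c.domain = Set.Icc a b ∧ c.toFun a ∈ E₀ ∧ c.toFun b ∈ E₁ ∧
    ∀ t ∈ Set.Ioo a b, c.toFun t ∈ A}

/-- The image of a curve family under a mapping. -/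
def ImageCurves {X Y : Type*} [TopologicalSpace X] [TopologicalSpace Y] (f : X → Y)
    (Γ : Set (Curve X)) : Set (Curve Y) :=
  {c' | ∃ c ∈ Γ, c'.domain = c.domain ∧ ∀ t ∈ c.domain, c'.toFun t = f (c.toFun t)}

/-- The open spherical ring `A(r₁,r₂,x₀) = {x : r₁ < |x − x₀| < r₂}`. -/
def ringDomain {n : ℕ} (x₀ : Eucl n) (r₁ r₂ : ℝ) : Set (Eucl n) :=
  {x | r₁ < dist x x₀ ∧ dist x x₀ < r₂}

/-- The (extended) distance from `x₀` to `∂D`, namely `∞` when `D = ℝⁿ`. -/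
def distToBoundary {n : ℕ} (x₀ : Eucl n) (D : Set (Eucl n)) : ℝ≥0∞ :=
  EMetric.infEdist x₀ Dᶜ

/-- `f : D → ℝⁿ` is a ring `(p,Q)`-mapping at the point `x₀`. -/
def IsRingMap (n : ℕ) (p : ℝ) (D : Set (Eucl n)) (Q : Eucl n → ℝ≥0∞) (x₀ : Eucl n)
    (f : Eucl n → Eucl n) : Prop :=
  ∀ r₁ r₂ : ℝ, 0 < r₁ → r₁ < r₂ → ENNReal.ofReal r₂ < distToBoundary x₀ D →
    ∀ η : ℝ → ℝ≥0∞, Measurable η → (1 : ℝ≥0∞) ≤ ∫⁻ r in Set.Ioo r₁ r₂, η r →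
      pModulus n p (ImageCurves f (JoinCurves (Metric.sphere x₀ r₁) (Metric.sphere x₀ r₂)
          (ringDomain x₀ r₁ r₂))) ≤
        ∫⁻ x in ringDomain x₀ r₁ r₂, Q x * η (dist x x₀) ^ p

/-- `f : D → \overline{ℝⁿ}` is a ring `(p,Q)`-mapping at the point `x₀`. -/
def IsRingMapOP (n : ℕ) (p : ℝ) (D : Set (Eucl n)) (Q : Eucl n → ℝ≥0∞) (x₀ : Eucl n)
    (f : Eucl n → RSphere n) : Prop :=
  ∀ r₁ r₂ : ℝ, 0 < r₁ → r₁ < r₂ → ENNReal.ofReal r₂ < distToBoundary x₀ D →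
    ∀ η : ℝ → ℝ≥0∞, Measurable η → (1 : ℝ≥0∞) ≤ ∫⁻ r in Set.Ioo r₁ r₂, η r →
      pModulusOP n p (ImageCurves f (JoinCurves (Metric.sphere x₀ r₁) (Metric.sphere x₀ r₂)
          (ringDomain x₀ r₁ r₂))) ≤
        ∫⁻ x in ringDomain x₀ r₁ r₂, Q x * η (dist x x₀) ^ p

/-- `f` is discrete on `D`: each fiber of `f` has only isolated points in `D`. -/
def DiscreteOn {X Y : Type*} [TopologicalSpace X] (f : X → Y) (D : Set X) : Prop :=
  ∀ x ∈ D, ∃ U ∈ nhds x, ∀ z ∈ U ∩ D, f z = f x → z = x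

/-- `f` is open on `D`: it maps open subsets of `D` onto open sets. -/
def IsOpenOn {X Y : Type*} [TopologicalSpace X] [TopologicalSpace Y] (f : X → Y)
    (D : Set X) : Prop :=
  ∀ U, U ⊆ D → IsOpen U → IsOpen (f '' U)

/-- `Q` has finite mean oscillation at `x₀`. -/
def FMOAt {n : ℕ} (Q : Eucl n → ℝ≥0∞) (x₀ : Eucl n) : Prop :=
  ∃ C : ℝ, ∀ᶠ ε in 𝓝[>] (0 : ℝ),
    (⨍ x in Metric.ball x₀ ε, |(Q x).toReal - ⨍ y in Metric.ball x₀ ε, (Q y).toReal|) ≤ C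

/-- The chordal metric on `\overline{ℝⁿ}` (auxiliary, on `Option`). -/
def chordalAux {n : ℕ} : Option (Eucl n) → Option (Eucl n) → ℝ
  | Option.some x, Option.some y =>
      dist x y / (Real.sqrt (1 + ‖x‖ ^ 2) * Real.sqrt (1 + ‖y‖ ^ 2))
  | Option.some x, Option.none => 1 / Real.sqrt (1 + ‖x‖ ^ 2)
  | Option.none, Option.some y => 1 / Real.sqrt (1 + ‖y‖ ^ 2)
  | Option.none, Option.none => 0

/-- The chordal metric `h` on `\overline{ℝⁿ}`. -/
def chordal {n : ℕ} (x y : RSphere n) : ℝ := chordalAux x y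

/-- The chordal diameter `h(S)` of a set `S ⊆ \overline{ℝⁿ}`. -/
def chordalDiam {n : ℕ} (S : Set (RSphere n)) : ℝ :=
  sSup ((fun q : RSphere n × RSphere n => chordal q.1 q.2) '' (S ×ˢ S))

/-- Equicontinuity at `x₀` of a family of `\overline{ℝⁿ}`-valued mappings on `D`
(w.r.t. the chordal metric in the target). -/
def EquicontAtOP {n : ℕ} (𝓕 : Set (Eucl n → RSphere n)) (D : Set (Eucl n))
    (x₀ : Eucl n) : Prop :=
  ∀ ε : ℝ, 0 < ε → ∃ δ : ℝ, 0 < δ ∧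
    ∀ f ∈ 𝓕, ∀ x ∈ D, dist x x₀ < δ → chordal (f x) (f x₀) < ε

/-- Equicontinuity at `x₀` of a family of `ℝⁿ`-valued mappings on `D`
(w.r.t. the chordal metric in the target). -/
def EquicontAt {n : ℕ} (𝓕 : Set (Eucl n → Eucl n)) (D : Set (Eucl n))
    (x₀ : Eucl n) : Prop :=
  ∀ ε : ℝ, 0 < ε → ∃ δ : ℝ, 0 < δ ∧
    ∀ f ∈ 𝓕, ∀ x ∈ D, dist x x₀ < δ → chordal (toRS (f x)) (toRS (f x₀)) < ε

/-- Normality of a family of `ℝⁿ`-valued mappings on `D`: every sequence has a subsequence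
converging uniformly on compact subsets of `D` (w.r.t. the chordal metric) to a continuous
mapping of `D` into `\overline{ℝⁿ}`. -/
def IsNormalFamily {n : ℕ} (𝓕 : Set (Eucl n → Eucl n)) (D : Set (Eucl n)) : Prop :=
  ∀ f : ℕ → Eucl n → Eucl n, (∀ k, f k ∈ 𝓕) →
    ∃ φ : ℕ → ℕ, StrictMono φ ∧ ∃ g : Eucl n → RSphere n, ContinuousOn g D ∧
      ∀ K, K ⊆ D → IsCompact K → ∀ ε : ℝ, 0 < ε →
        ∀ᶠ k in Filter.atTop, ∀ x ∈ K, chordal (toRS (f (φ k) x)) (g x) < ε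

/-- `v` is absolutely continuous on `[a,b]`: it is the indefinite integral of an
integrable function. -/
def AbsContOnIcc (v : ℝ → ℝ) (a b : ℝ) : Prop :=
  ∃ g : ℝ → ℝ, IntegrableOn g (Set.Icc a b) ∧ ∀ x ∈ Set.Icc a b, v x = v a + ∫ t in a..x, g t

/-- `u` is absolutely continuous on lines (ACL) in `A`: for each coordinate direction,
for a.e. line, `u` is absolutely continuous on compact subintervals lying in `A`. -/
def ACLOn {n : ℕ} (u : Eucl n → ℝ) (A : Set (Eucl n)) : Prop :=
  ∀ i : Fin n, ∀ᵐ x ∂(volume : Measure (Eucl n)), ∀ a b : ℝ, a ≤ b →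
    (∀ t ∈ Set.Icc a b, x + t • EuclideanSpace.single i (1 : ℝ) ∈ A) →
    AbsContOnIcc (fun t => u (x + t • EuclideanSpace.single i (1 : ℝ))) a b

/-- `|∇u|`, via the a.e. existing partial derivatives. -/
def gradNorm {n : ℕ} (u : Eucl n → ℝ) (x : Eucl n) : ℝ :=
  Real.sqrt (∑ i : Fin n, (lineDeriv ℝ u x (EuclideanSpace.single i (1 : ℝ))) ^ 2)

/-- The admissible class `W₀(A,C)` for the variational `p`-capacity. -/
def W0 {n : ℕ} (A C : Set (Eucl n)) : Set (Eucl n → ℝ) :=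
  {u | ContinuousOn u A ∧ (∀ x, 0 ≤ u x) ∧ ACLOn u A ∧
    (∃ K, IsCompact K ∧ K ⊆ A ∧ ∀ x ∉ K, u x = 0) ∧ ∀ x ∈ C, 1 ≤ u x}

/-- The variational `p`-capacity of the condenser `E = (A,C)` in `ℝⁿ`. -/
def pCap (n : ℕ) (p : ℝ) (A C : Set (Eucl n)) : ℝ≥0∞ :=
  ⨅ u : W0 A C, ∫⁻ x in A, ENNReal.ofReal (gradNorm u.1 x) ^ p

/-- A compact set `C` has zero `p`-capacity. -/
def IsZeroPCap {n : ℕ} (p : ℝ) (C : Set (Eucl n)) : Prop :=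
  ∃ A : Set (Eucl n), IsOpen A ∧ Bornology.IsBounded A ∧ C ⊆ A ∧ pCap n p A C = 0

/-- An arbitrary set `S ⊆ ℝⁿ` has positive `p`-capacity: some compact subset of `S`
does not have zero `p`-capacity. -/
def HasPosPCap {n : ℕ} (p : ℝ) (S : Set (Eucl n)) : Prop :=
  ∃ K, K ⊆ S ∧ IsCompact K ∧ ¬ IsZeroPCap p K

/-- The curve family `Γ_E` of a condenser `E = (A,C)`: curves `γ : [a,b) → A` starting in `C`
whose locus leaves every compact subset of `A`. -/
def condenserCurves {X : Type*} [TopologicalSpace X] (A C : Set X) : Set (Curve X) :=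
  {c | ∃ a b : ℝ, a < b ∧ c.domain = Set.Ico a b ∧ c.toFun a ∈ C ∧
    (∀ t ∈ Set.Ico a b, c.toFun t ∈ A) ∧
    ∀ F : Set X, IsCompact F → F ⊆ A → ∃ t ∈ Set.Ico a b, c.toFun t ∈ A \ F}

/-- The `p`-capacity of a condenser `(A,C)` in `\overline{ℝⁿ}`, defined as `M_p(Γ_E)`. -/
def pCapOP (n : ℕ) (p : ℝ) (A C : Set (RSphere n)) : ℝ≥0∞ :=
  pModulusOP n p (condenserCurves A C)

/-- The area `ω_{n−1}` of the unit sphere in `ℝⁿ` (as `(n−1)`-Hausdorff measure). -/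
def sphereArea (n : ℕ) : ℝ≥0∞ := μH[((n : ℝ) - 1)] (Metric.sphere (0 : Eucl n) 1)

/-- The spherical mean `q_{x₀}(r)` of `Q` over the sphere `|x − x₀| = r`. -/
def sphMean {n : ℕ} (Q : Eucl n → ℝ≥0∞) (x₀ : Eucl n) (r : ℝ) : ℝ≥0∞ :=
  (∫⁻ x in Metric.sphere x₀ r, Q x ∂(μH[((n : ℝ) - 1)])) /
    (sphereArea n * ENNReal.ofReal (r ^ ((n : ℝ) - 1)))

/-!
Write `P = B(0,R)` and `M = \overline{B(0,R)}`, and pick `p, q ∈ C` with `h(p,q) > a/2 + h(Pᶜ)`.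
If `C ⊆ M` take `C₁ = C`. Otherwise, by boundary bumping, the component in `C ∩ M` of any
`x ∈ C ∩ P` reaches `closure (C \ M) ⊆ Pᶜ` at some `y`. Replacing each of `p`, `q` that lies in `P`
by such a `y` lands both in `Pᶜ`, where they are at most `h(Pᶜ) < a/2` apart, so one of these
replacements moves a point by more than `a/4`, and its component is `C₁`.

The chordal metric is the Euclidean distance after stereographic projection, written as an
inversion, which yields its triangle inequality.
-/

section Chordal

open EuclideanGeometry

variable {n : ℕ}

def northPole (n : ℕ) : WithLp 2 (Eucl n × ℝ) := WithLp.toLp 2 (0, 1)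

/-- Inversion of `ℝⁿ × {0}` in the unit sphere about the north pole `(0, 1)`, sending `∞` to the
pole: the stereographic projection onto the sphere of diameter `1` tangent to `ℝⁿ` at `0`. -/
def chordalEmbedding (x : RSphere n) : WithLp 2 (Eucl n × ℝ) :=
  x.elim (northPole n) fun v => inversion (northPole n) 1 (WithLp.toLp 2 (v, 0))

lemma dist_toLp_northPole (v : Eucl n) :
    dist (WithLp.toLp 2 (v, (0 : ℝ))) (northPole n) = √(1 + ‖v‖ ^ 2) := by
  simp [northPole, WithLp.prod_dist_eq_of_L2, add_comm]

lemma toLp_ne_northPole (v : Eucl n) : WithLp.toLp 2 (v, (0 : ℝ)) ≠ northPole n := by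
  simp [northPole]

lemma chordal_eq_dist_chordalEmbedding (x y : RSphere n) :
    chordal x y = dist (chordalEmbedding x) (chordalEmbedding y) := by
  induction x using OnePoint.rec with
  | infty => induction y using OnePoint.rec with
    | infty => exact (dist_self _).symm
    | coe w =>
      change 1 / √(1 + ‖w‖ ^ 2) = dist (northPole n) (inversion (northPole n) 1 _)
      rw [dist_center_inversion, dist_comm, dist_toLp_northPole, one_pow]
  | coe v => induction y using OnePoint.rec with
    | infty =>
      change 1 / √(1 + ‖v‖ ^ 2) = dist (inversion (northPole n) 1 _) (northPole n)
      rw [dist_inversion_center, dist_toLp_northPole, one_pow]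
    | coe w =>
      change dist v w / (√(1 + ‖v‖ ^ 2) * √(1 + ‖w‖ ^ 2)) =
        dist (inversion (northPole n) 1 _) (inversion (northPole n) 1 _)
      rw [dist_inversion_inversion (toLp_ne_northPole v) (toLp_ne_northPole w),
        dist_toLp_northPole, dist_toLp_northPole]
      simp [div_eq_inv_mul]

lemma chordal_self (x : RSphere n) : chordal x x = 0 := by
  rw [chordal_eq_dist_chordalEmbedding, dist_self]

lemma chordal_comm (x y : RSphere n) : chordal x y = chordal y x := by
  simp only [chordal_eq_dist_chordalEmbedding, dist_comm]

lemma chordal_triangle (x y z : RSphere n) : chordal x z ≤ chordal x y + chordal y z := by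
  simp only [chordal_eq_dist_chordalEmbedding]
  exact dist_triangle _ _ _

lemma chordal_infty_le_one (x : RSphere n) : chordal OnePoint.infty x ≤ 1 := by
  induction x using OnePoint.rec with
  | infty => exact (chordal_self _).trans_le zero_le_one
  | coe v =>
    change 1 / √(1 + ‖v‖ ^ 2) ≤ 1
    rw [div_le_one (by positivity), Real.one_le_sqrt]
    exact le_add_of_nonneg_right (by positivity)

lemma chordal_le_two (x y : RSphere n) : chordal x y ≤ 2 := by
  linarith [chordal_triangle x OnePoint.infty y, chordal_comm x OnePoint.infty,
    chordal_infty_le_one x, chordal_infty_le_one y]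

lemma chordal_le_chordalDiam {S : Set (RSphere n)} {x y : RSphere n} (hx : x ∈ S) (hy : y ∈ S) :
    chordal x y ≤ chordalDiam S :=
  le_csSup ⟨2, by rintro _ ⟨⟨x, y⟩, -, rfl⟩; exact chordal_le_two x y⟩ ⟨(x, y), ⟨hx, hy⟩, rfl⟩

lemma exists_lt_chordal_of_lt_chordalDiam {S : Set (RSphere n)} (hS : S.Nonempty) {c : ℝ}
    (h : c < chordalDiam S) : ∃ x ∈ S, ∃ y ∈ S, c < chordal x y := by
  obtain ⟨_, ⟨⟨x, y⟩, ⟨hx, hy⟩, rfl⟩, hc⟩ := exists_lt_of_lt_csSup ((hS.prod hS).image _) h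
  exact ⟨x, hx, y, hy, hc⟩

lemma exists_lt_chordal_of_two_mul_add_chordalDiam_lt {S P : Set (RSphere n)}
    {Q : RSphere n → RSphere n → Prop} {c : ℝ} (hc : 0 ≤ c)
    (hQ : ∀ x ∈ S ∩ P, ∃ y ∉ P, Q x y) {p q : RSphere n} (hp : p ∈ S) (hq : q ∈ S)
    (hpq : 2 * c + chordalDiam Pᶜ < chordal p q) :
    ∃ x ∈ S ∩ P, ∃ y ∉ P, Q x y ∧ c < chordal x y := by
  by_contra! h
  have hnear : ∀ x ∈ S, ∃ y ∉ P, chordal x y ≤ c := fun x hx => by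
    by_cases hxP : x ∈ P
    · obtain ⟨y, hyP, hxy⟩ := hQ x ⟨hx, hxP⟩
      exact ⟨y, hyP, h x ⟨hx, hxP⟩ y hyP hxy⟩
    · exact ⟨x, hxP, (chordal_self x).trans_le hc⟩
  obtain ⟨p', hp'P, hpp'⟩ := hnear p hp
  obtain ⟨q', hq'P, hqq'⟩ := hnear q hq
  linarith [chordal_triangle p p' q, chordal_triangle p' q' q, chordal_comm q q',
    chordal_le_chordalDiam (S := Pᶜ) hp'P hq'P]

end Chordal

section BoundaryBumping

variable {X : Type*} [TopologicalSpace X]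

theorem IsCompact.connectedComponentIn {F : Set X} (hF : IsCompact F) (x : X) :
    IsCompact (connectedComponentIn F x) := by
  by_cases hx : x ∈ F
  · have : CompactSpace F := isCompact_iff_compactSpace.mp hF
    rw [connectedComponentIn_eq_image hx]
    exact isClosed_connectedComponent.isCompact.image continuous_subtype_val
  · rw [connectedComponentIn_eq_empty hx]
    exact isCompact_empty

theorem exists_isClopen_of_connectedComponent_subset [T2Space X] [CompactSpace X] {x : X}
    {U : Set X} (hU : IsOpen U) (h : connectedComponent x ⊆ U) :
    ∃ Q, IsClopen Q ∧ x ∈ Q ∧ Q ⊆ U := by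
  rw [connectedComponent_eq_iInter_isClopen] at h
  obtain ⟨t, ht⟩ := hU.isClosed_compl.isCompact.elim_finite_subfamily_closed
    (fun s : {s : Set X // IsClopen s ∧ x ∈ s} => (s : Set X)) (fun s => s.2.1.isClosed)
    (by rwa [← disjoint_iff_inter_eq_empty, disjoint_compl_left_iff_subset])
  refine ⟨⋂ s ∈ t, s, isClopen_biInter_finset fun s _ => s.2.1,
    mem_iInter₂.2 fun s _ => s.2.2, ?_⟩
  rwa [← disjoint_iff_inter_eq_empty, disjoint_compl_left_iff_subset] at ht

/-- The boundary bumping theorem for continua. -/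
theorem connectedComponentIn_inter_closure_diff_nonempty [T2Space X] {C M : Set X}
    (hC : IsCompact C) (hCconn : IsPreconnected C) (hM : IsClosed M) (hCM : ¬C ⊆ M) {x : X}
    (hx : x ∈ C ∩ M) : (connectedComponentIn (C ∩ M) x ∩ closure (C \ M)).Nonempty := by
  by_contra h
  rw [not_nonempty_iff_eq_empty, ← disjoint_iff_inter_eq_empty] at h
  have : CompactSpace ↥(C ∩ M) := isCompact_iff_compactSpace.mp (hC.inter_right hM)
  -- components of the compact Hausdorff space `C ∩ M` are quasi-components, so some clopen
  -- `Q ∋ x` of `C ∩ M` avoids `closure (C \ M)`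
  obtain ⟨Q, hQ, hxQ, hQU⟩ := exists_isClopen_of_connectedComponent_subset (x := ⟨x, hx⟩)
    (isClosed_closure.isOpen_compl.preimage continuous_subtype_val)
    (by rw [← image_subset_iff, ← connectedComponentIn_eq_image hx]; exact h.subset_compl_right)
  obtain ⟨V, hV, rfl⟩ := isOpen_induced_iff.mp hQ.isOpen
  -- so its image `S` is closed, and relatively open in the connected set `C`
  set S := Subtype.val '' (Subtype.val ⁻¹' V : Set ↥(C ∩ M))
  have hS : IsClosed S := (hQ.isClosed.isCompact.image continuous_subtype_val).isClosed
  have hcover : C ⊆ V ∩ (closure (C \ M))ᶜ ∪ Sᶜ := by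
    intro c _
    by_cases hc : c ∈ S
    · obtain ⟨c, hcV, rfl⟩ := hc
      exact Or.inl ⟨hcV, hQU hcV⟩
    · exact Or.inr hc
  have hdisj : C ∩ ((V ∩ (closure (C \ M))ᶜ) ∩ Sᶜ) = ∅ := by
    refine eq_empty_of_forall_notMem ?_
    rintro c ⟨hcC, ⟨hcV, hcl⟩, hcS⟩
    have hcM : c ∈ M := by_contra fun hcM => hcl (subset_closure ⟨hcC, hcM⟩)
    exact hcS ⟨⟨c, hcC, hcM⟩, hcV, rfl⟩
  rcases isPreconnected_iff_subset_of_disjoint.mp hCconn _ _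
      (hV.inter isClosed_closure.isOpen_compl) hS.isOpen_compl hcover hdisj with hCU | hCS
  · obtain ⟨w, hwC, hwM⟩ := not_subset.mp hCM
    exact (hCU hwC).2 (subset_closure ⟨hwC, hwM⟩)
  · exact hCS hx.1 ⟨⟨x, hx⟩, hxQ, rfl⟩

end BoundaryBumping

theorem exists_subcontinuum_general (n : ℕ) (a R : ℝ) (ha : 0 < a)
    (hout : chordalDiam ((toRS '' Metric.ball (0 : Eucl n) R)ᶜ) < a / 2)
    (C : Set (RSphere n)) (hCcpt : IsCompact C) (hCconn : IsConnected C)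
    (hCnt : C.Nontrivial) (hCd : a ≤ chordalDiam C) :
    ∃ C₁ : Set (RSphere n), C₁ ⊆ C ∧ C₁ ⊆ toRS '' Metric.closedBall (0 : Eucl n) R ∧
      IsCompact C₁ ∧ IsConnected C₁ ∧ C₁.Nontrivial ∧ a / 4 ≤ chordalDiam C₁ := by
  set P := toRS '' Metric.ball (0 : Eucl n) R
  set M := toRS '' Metric.closedBall (0 : Eucl n) R
  obtain ⟨p, hp, q, hq, hpq⟩ := exists_lt_chordal_of_lt_chordalDiam hCnt.nonempty
    (show a / 2 + chordalDiam Pᶜ < chordalDiam C by linarith)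
  by_cases hCM : C ⊆ M
  · exact ⟨C, subset_rfl, hCM, hCcpt, hCconn, hCnt, by linarith⟩
  have hPM : P ⊆ M := image_mono ball_subset_closedBall
  have hP : IsOpen P := OnePoint.isOpen_image_coe.2 isOpen_ball
  have hM : IsClosed M := ((isCompact_closedBall 0 R).image OnePoint.continuous_coe).isClosed
  have hescape : ∀ x ∈ C ∩ P, ∃ y ∉ P, y ∈ connectedComponentIn (C ∩ M) x := by
    rintro x ⟨hxC, hxP⟩
    obtain ⟨y, hyK, hy⟩ := connectedComponentIn_inter_closure_diff_nonempty hCcpt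
      hCconn.isPreconnected hM hCM ⟨hxC, hPM hxP⟩
    have hPy : Disjoint P (closure (C \ M)) :=
      (disjoint_sdiff_right.mono_left hPM).closure_right hP
    exact ⟨y, hPy.notMem_of_mem_right hy, hyK⟩
  obtain ⟨x, ⟨hxC, hxP⟩, y, hyP, hyK, hxy⟩ :=
    exists_lt_chordal_of_two_mul_add_chordalDiam_lt (c := a / 4) (by positivity) hescape hp hq
      (by linarith)
  have hx : x ∈ C ∩ M := ⟨hxC, hPM hxP⟩
  have hxK := mem_connectedComponentIn hx
  exact ⟨connectedComponentIn (C ∩ M) x, fun z hz => (connectedComponentIn_subset _ _ hz).1,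
    fun z hz => (connectedComponentIn_subset _ _ hz).2,
    (hCcpt.inter_right hM).connectedComponentIn x, isConnected_connectedComponentIn_iff.2 hx,
    ⟨x, hxK, y, hyK, ne_of_mem_of_not_mem hxP hyP⟩,
    hxy.le.trans (chordal_le_chordalDiam hxK hyK)⟩

/-- if the chordal diameter of `\overline{ℝⁿ}∖B(0,R)` is less than `a/2`,
then every continuum `C ⊆ \overline{ℝⁿ}` with `h(C) ≥ a` contains a subcontinuum
`C₁ ⊆ \overline{B(0,R)}` with `h(C₁) ≥ a/4`. -/
theorem exists_subcontinuum (n : ℕ) (hn : 2 ≤ n) (a R : ℝ) (ha : 0 < a) (hR : 0 < R)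
    (hout : chordalDiam ((toRS '' Metric.ball (0 : Eucl n) R)ᶜ) < a / 2)
    (C : Set (RSphere n)) (hCcpt : IsCompact C) (hCconn : IsConnected C)
    (hCnt : C.Nontrivial) (hCd : a ≤ chordalDiam C) :
    ∃ C₁ : Set (RSphere n), C₁ ⊆ C ∧ C₁ ⊆ toRS '' Metric.closedBall (0 : Eucl n) R ∧
      IsCompact C₁ ∧ IsConnected C₁ ∧ C₁.Nontrivial ∧ a / 4 ≤ chordalDiam C₁ :=
  exists_subcontinuum_general n a R ha hout C hCcpt hCconn hCnt hCd
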